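/- The Lukacs derivative operator satisfies L⁽¹⁾ J_Ψ = J_{T₁Ψ}, where T₁Ψ(u) = (u/(u+1))·Ψ(u+1): explicitly, the derivative of J_Ψ(t) = Σ (-1)ⁿ t^{2n}/W_Ψ(n+1) satisfies J_Ψ'(t) = (-2t/Ψ(1)) · Σ_{n≥0} (-1)ⁿ t^{2n} / Π_{k=1}^{n} ((k/(k+1))·Ψ(k+1)). -/

import Mathlib

open Filter

/-- The Lukacs derivative identity `L⁽¹⁾ J_Ψ = J_{T₁Ψ}`: the derivative of
`J_Ψ(t) = Σ (-1)ⁿ t^{2n}/W_Ψ(n+1)` satisfies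
`J_Ψ'(t) = (-2t/Ψ(1)) Σ (-1)ⁿ t^{2n} / Π_{k=1}^n ((k/(k+1)) Ψ(k+1))`. -/
theorem L1_JPsi (Ψ : ℝ → ℝ)
    (hpos : ∀ k : ℕ, 1 ≤ k → 0 < Ψ k)
    (hlim : Tendsto (fun k : ℕ => Ψ k) atTop atTop) :
    ∀ t : ℝ,
      deriv (fun s : ℝ =>
          ∑' n : ℕ, (-1 : ℝ) ^ n * s ^ (2 * n) / ∏ k ∈ Finset.Icc 1 n, Ψ k) t =
        (-2 * t / Ψ 1) *
          ∑' n : ℕ, (-1 : ℝ) ^ n * t ^ (2 * n) /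
            ∏ k ∈ Finset.Icc 1 n, (((k : ℝ) / ((k : ℝ) + 1)) * Ψ (k + 1)) := by
  intro t
  set W : ℕ → ℝ := fun n => ∏ k ∈ Finset.Icc 1 n, Ψ k with hW
  have hWpos : ∀ n, 0 < W n := by
    intro n
    exact Finset.prod_pos fun k hk => hpos k (Finset.mem_Icc.mp hk).1
  have hΨ1 : Ψ 1 ≠ 0 := by
    have := (hpos 1 le_rfl).ne'
    rwa [Nat.cast_one] at this
  set R : ℝ := |t| + 1 with hR
  have hR1 : 1 ≤ R := by rw [hR]; linarith [abs_nonneg t]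
  have hR0 : 0 < R := by linarith
  have htR : |t| < R := by rw [hR]; linarith
  obtain ⟨N, hN⟩ := eventually_atTop.mp (hlim.eventually_ge_atTop (4 * R ^ 2))
  set u : ℕ → ℝ := fun n => 2 * n * R ^ (2 * n - 1) / W n with hu
  have hWsucc : ∀ n : ℕ, W (n + 1) = W n * Ψ ((n : ℝ) + 1) := by
    intro n
    have : W (n + 1) = (∏ k ∈ Finset.Icc 1 n, Ψ k) * Ψ ((n + 1 : ℕ)) :=
      Finset.prod_Icc_succ_top (Nat.le_add_left 1 n) _
    rw [this]; push_cast; rfl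
  have hΨbig : ∀ n : ℕ, N ≤ n → 4 * R ^ 2 ≤ Ψ ((n : ℝ) + 1) := by
    intro n hn
    have := hN (n + 1) (by omega)
    push_cast at this; exact this
  have hΨp : ∀ n : ℕ, 0 < Ψ ((n : ℝ) + 1) := by
    intro n
    have := hpos (n + 1) (by omega)
    push_cast at this; exact this
  have hu_sum : Summable u := by
    apply summable_of_ratio_norm_eventually_le (r := 1/2) (by norm_num)
    filter_upwards [eventually_ge_atTop (max N 1)] with n hn
    have hn1 : 1 ≤ n := le_trans (le_max_right _ _) hn
    have hn1' : (1 : ℝ) ≤ n := by exact_mod_cast hn1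
    have hΨn : 4 * R ^ 2 ≤ Ψ ((n : ℝ) + 1) := hΨbig n (le_trans (le_max_left _ _) hn)
    have hΨpos : 0 < Ψ ((n : ℝ) + 1) := hΨp n
    have hWn := hWpos n
    have hRn : (0:ℝ) < R ^ (2 * n - 1) := by positivity
    have hue : u (n + 1) = (2 * ((n : ℝ) + 1) * (R ^ (2 * n - 1) * R ^ 2)) / (W n * Ψ ((n:ℝ) + 1)) := by
      rw [hu]
      simp only
      rw [hWsucc]
      congr 1
      rw [show 2 * (n + 1) - 1 = (2 * n - 1) + 2 from by omega, pow_add]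
      push_cast
      ring
    have hupos : 0 ≤ u n := div_nonneg (by positivity) hWn.le
    rw [Real.norm_eq_abs, Real.norm_eq_abs, abs_of_nonneg (by rw [hue]; positivity),
      abs_of_nonneg hupos, hue, hu]
    simp only
    rw [← mul_div_assoc, div_le_div_iff₀ (by positivity) (by positivity)]
    have key : 2 * ((n:ℝ) + 1) * R ^ 2 ≤ (n:ℝ) * Ψ ((n:ℝ) + 1) := by
      nlinarith [sq_nonneg R, mul_nonneg (sub_nonneg.mpr hn1') (sq_nonneg R),
        mul_le_mul_of_nonneg_left hΨn (Nat.cast_nonneg n : (0:ℝ) ≤ n)]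
    calc 2 * ((n:ℝ) + 1) * (R ^ (2 * n - 1) * R ^ 2) * W n
        = (2 * ((n:ℝ) + 1) * R ^ 2) * (R ^ (2 * n - 1) * W n) := by ring
      _ ≤ ((n:ℝ) * Ψ ((n:ℝ) + 1)) * (R ^ (2 * n - 1) * W n) :=
          mul_le_mul_of_nonneg_right key (by positivity)
      _ = 1 / 2 * (2 * ↑n * R ^ (2 * n - 1)) * (W n * Ψ ((n:ℝ) + 1)) := by ring
  set g : ℕ → ℝ → ℝ := fun n s => (-1 : ℝ) ^ n * s ^ (2 * n) / W n with hg
  set g' : ℕ → ℝ → ℝ := fun n s => (-1 : ℝ) ^ n * (((2 * n : ℕ) : ℝ) * s ^ (2 * n - 1)) / W n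
    with hg'
  have hnorm : ∀ (n : ℕ) (y : ℝ), ‖g' n y‖ = 2 * n * |y| ^ (2 * n - 1) / W n := by
    intro n y
    rw [hg']
    simp only [Real.norm_eq_abs, abs_div, abs_mul, abs_pow, abs_neg, abs_one, one_pow, one_mul,
      abs_of_pos (hWpos n), Nat.abs_cast]
    push_cast
    ring
  have hbound : ∀ (n : ℕ) (y : ℝ), y ∈ Metric.ball (0:ℝ) R → ‖g' n y‖ ≤ u n := by
    intro n y hy
    have hyR : |y| ≤ R := by
      have : dist y 0 < R := Metric.mem_ball.mp hy
      rw [Real.dist_eq, sub_zero] at this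
      linarith
    rw [hnorm, hu]
    simp only
    gcongr
    all_goals first | exact hyR | exact abs_nonneg y | exact (hWpos n).le | positivity
  have hdiff : ∀ (n : ℕ) (y : ℝ), y ∈ Metric.ball (0:ℝ) R → HasDerivAt (g n) (g' n y) y := by
    intro n y _
    exact ((hasDerivAt_pow (2 * n) y).const_mul ((-1 : ℝ) ^ n)).div_const (W n)
  have htmem : t ∈ Metric.ball (0:ℝ) R := by
    rw [Metric.mem_ball, Real.dist_eq, sub_zero]; exact htR
  have hg0 : Summable fun n => g n t := by
    set v : ℕ → ℝ := fun n => R ^ (2 * n) / W n with hv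
    have hv_sum : Summable v := by
      apply summable_of_ratio_norm_eventually_le (r := 1/2) (by norm_num)
      filter_upwards [eventually_ge_atTop N] with n hn
      have hΨn : 4 * R ^ 2 ≤ Ψ ((n : ℝ) + 1) := hΨbig n hn
      have hΨpos : 0 < Ψ ((n : ℝ) + 1) := hΨp n
      have hWn := hWpos n
      rw [Real.norm_eq_abs, Real.norm_eq_abs, hv]
      simp only
      rw [abs_of_nonneg (div_nonneg (by positivity) (hWpos _).le),
        abs_of_nonneg (div_nonneg (by positivity) (hWpos _).le), hWsucc,
        show 2 * (n + 1) = 2 * n + 2 from by ring, pow_add, ← mul_div_assoc,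
        div_le_div_iff₀ (by positivity) (by positivity)]
      clear_value W R
      have h := mul_le_mul_of_nonneg_left hΨn
          (mul_nonneg (pow_pos hR0 (2 * n)).le hWn.le)
      have h2 : (0:ℝ) ≤ R ^ (2 * n) * W n * R ^ 2 :=
        mul_nonneg (mul_nonneg (pow_pos hR0 (2 * n)).le hWn.le) (sq_nonneg R)
      nlinarith [h, h2]
    apply Summable.of_norm_bounded hv_sum
    intro n
    rw [hg]
    simp only [Real.norm_eq_abs, abs_div, abs_mul, abs_pow, abs_neg, abs_one, one_pow, one_mul,
      abs_of_pos (hWpos n), hv]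
    gcongr
    all_goals first | exact htR.le | exact abs_nonneg t | exact (hWpos n).le | positivity
  have Hd : HasDerivAt (fun z : ℝ => ∑' n : ℕ, g n z) (∑' n, g' n t) t :=
    hasDerivAt_tsum_of_isPreconnected hu_sum Metric.isOpen_ball
      (convex_ball (0:ℝ) R).isPreconnected hdiff hbound htmem hg0 htmem
  have hderiv : deriv (fun s : ℝ => ∑' n : ℕ, (-1 : ℝ) ^ n * s ^ (2 * n) / W n) t
      = ∑' n, g' n t := Hd.deriv
  rw [hderiv]
  -- product identity
  have hprod : ∀ m : ℕ, (∏ k ∈ Finset.Icc 1 m, (((k : ℝ) / ((k : ℝ) + 1)) * Ψ ((k : ℝ) + 1)))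
      = W (m + 1) / (((m : ℝ) + 1) * Ψ 1) := by
    intro m
    induction m with
    | zero =>
      have hW1 : W 1 = Ψ 1 := by rw [hW]; simp
      simp only [Nat.cast_zero, zero_add, one_mul, hW1]
      rw [Finset.Icc_eq_empty (by norm_num), Finset.prod_empty, div_self hΨ1]
    | succ m ih =>
      rw [Finset.prod_Icc_succ_top (Nat.le_add_left 1 m), ih, hWsucc (m + 1)]
      have h1 : ((m : ℝ) + 1) ≠ 0 := by positivity
      have h2 : ((m : ℝ) + 1 + 1) ≠ 0 := by positivity
      have h3 : W (m + 1) ≠ 0 := (hWpos (m + 1)).ne'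
      push_cast
      field_simp
  have hsum' : Summable fun n => g' n t :=
    Summable.of_norm_bounded hu_sum fun n => hbound n t htmem
  rw [← tsum_mul_left, hsum'.tsum_eq_zero_add]
  have h0 : g' 0 t = 0 := by rw [hg']; simp
  rw [h0, zero_add]
  apply tsum_congr
  intro m
  rw [hg', hprod m]
  simp only
  have h1 : ((m : ℝ) + 1) ≠ 0 := by positivity
  have h3 : W (m + 1) ≠ 0 := (hWpos (m + 1)).ne'
  rw [show 2 * (m + 1) - 1 = 2 * m + 1 from by omega, pow_succ]
  push_cast
  field_simp
  ring
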